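/- arXiv:2012.10368 — 2 statements merged into one kernel-verified Lean document; each statement's English description precedes it below -/
import Mathlib

section
/- Let n ≥ 3 be odd and (α,β) ∈ Γ_n with β > n² > α. Then ‖f^n_{α,β}‖² = π/2 − π·(n−1)·(√β + 1)·(√β − n)/(√β·(2√β − (n−1))²). -/
open MeasureTheory Real Set Filter

noncomputable def L2normSq (f : ℝ → ℝ) : ℝ := ∫ x in Ioo (0:ℝ) π, (f x)^2

noncomputable def L2innerProd (f g : ℝ → ℝ) : ℝ := ∫ x in Ioo (0:ℝ) π, f x * g x

/-- The Fučík spectral curve `Γ_n`. -/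
def FucikCurve (n : ℕ) (a b : ℝ) : Prop :=
  1 < a ∧ 1 < b ∧
  (if Even n
    then ((n : ℝ)/2) * (π / Real.sqrt a) + ((n : ℝ)/2) * (π / Real.sqrt b) = π
    else (((n : ℝ)+1)/2) * (π / Real.sqrt a) + (((n : ℝ)-1)/2) * (π / Real.sqrt b) = π)

/-- The normalized Fučík eigenfunction `f^n_{a,b}`. -/
noncomputable def fucikEf (n : ℕ) (a b : ℝ) (x : ℝ) : ℝ :=
  if n = 1 then Real.sin x
  else
    let l1 := π / Real.sqrt a
    let l2 := π / Real.sqrt b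
    let l := l1 + l2
    let y := l * Int.fract (x / l)
    if (n : ℝ)^2 ≤ a then
      if y < l1 then (Real.sqrt b / Real.sqrt a) * Real.sin (Real.sqrt a * y)
      else - Real.sin (Real.sqrt b * (y - l1))
    else
      if y < l1 then Real.sin (Real.sqrt a * y)
      else - (Real.sqrt a / Real.sqrt b) * Real.sin (Real.sqrt b * (y - l1))

/-- A Fučík system, given by mappings `a b : ℕ → ℝ`. -/
structure FucikSystem (a b : ℕ → ℝ) : Prop where
  one_a : a 1 = 1
  one_b : b 1 = 1
  curve : ∀ n, 2 ≤ n → FucikCurve n (a n) (b n)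

/-- `{ψ_n}_{n ≥ 1}` is a Riesz basis of `L²(0,π)`: its span is dense and the two-sided
frame inequalities hold. -/
def IsRieszBasis (ψ : ℕ → ℝ → ℝ) : Prop :=
  (∀ g : ℝ → ℝ, MeasureTheory.MemLp g 2 (MeasureTheory.volume.restrict (Ioo (0:ℝ) π)) →
    ∀ ε : ℝ, 0 < ε → ∃ (N : ℕ) (s : ℕ → ℝ),
      L2normSq (fun x => g x - ∑ n ∈ Finset.Icc 1 N, s n * ψ n x) < ε) ∧
  (∃ c : ℝ, 0 < c ∧ ∃ C : ℝ, 0 < C ∧ ∀ (N : ℕ) (s : ℕ → ℝ),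
      c * ∑ n ∈ Finset.Icc 1 N, (s n)^2
        ≤ L2normSq (fun x => ∑ n ∈ Finset.Icc 1 N, s n * ψ n x) ∧
      L2normSq (fun x => ∑ n ∈ Finset.Icc 1 N, s n * ψ n x)
        ≤ C * ∑ n ∈ Finset.Icc 1 N, (s n)^2)


/-! Write `l = π/√a + π/√b` and `n = 2m + 1`. The curve equation says `π = m·l + π/√a`, so `[0, π]`
is covered by `m` full periods of the `l`-periodic eigenfunction followed by one positive half
wave. A period contributes `π/(2√a) + (a/b)·π/(2√b)` to `∫ f²` and the half wave `π/(2√a)`;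
eliminating `√a` through the curve equation gives the closed form. -/

noncomputable def periodize (l : ℝ) (g : ℝ → ℝ) (x : ℝ) : ℝ := g (l * Int.fract (x / l))

section Periodize

variable {l : ℝ} {g : ℝ → ℝ}

theorem periodic_periodize (hl : l ≠ 0) : Function.Periodic (periodize l g) l := by
  intro x
  simp only [periodize, add_div, div_self hl, Int.fract_add_one]

theorem periodize_eq_self {x : ℝ} (hx : x ∈ Ico 0 l) : periodize l g x = g x := by
  have hl : 0 < l := hx.1.trans_lt hx.2
  have hfract : Int.fract (x / l) = x / l :=
    Int.fract_eq_self.mpr ⟨div_nonneg hx.1 hl.le, (div_lt_one hl).mpr hx.2⟩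
  rw [periodize, hfract, mul_div_cancel₀ x hl.ne']

theorem integral_periodize_of_mem_Icc {c : ℝ} (hc : c ∈ Icc 0 l) :
    ∫ x in 0..c, periodize l g x = ∫ x in 0..c, g x := by
  refine intervalIntegral.integral_congr_uIoo fun x hx => periodize_eq_self ?_
  rw [uIoo_of_le hc.1] at hx
  exact ⟨hx.1.le, hx.2.trans_le hc.2⟩

theorem integral_periodize_nat_mul_add (hl : 0 < l) (hg : IntervalIntegrable g volume 0 l)
    (m : ℕ) {c : ℝ} (hc : c ∈ Icc 0 l) :
    ∫ x in 0..m * l + c, periodize l g x = m * (∫ x in 0..l, g x) + ∫ x in 0..c, g x := by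
  have hper := periodic_periodize (g := g) hl.ne'
  have hint : ∀ t₁ t₂, IntervalIntegrable (periodize l g) volume t₁ t₂ := by
    refine hper.intervalIntegrable (t := 0) hl.ne' ?_
    rw [zero_add]
    refine hg.congr_uIoo fun x hx => (periodize_eq_self (g := g) ?_).symm
    rw [uIoo_of_le hl.le] at hx
    exact Ioo_subset_Ico_self hx
  have hperiods : ∫ x in 0..m * l, periodize l g x = m * ∫ x in 0..l, g x := by
    have := hper.intervalIntegral_add_zsmul_eq m 0 hint
    simp only [zero_add, natCast_zsmul, nsmul_eq_mul] at this
    rw [this, integral_periodize_of_mem_Icc ⟨hl.le, le_rfl⟩]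
  have hlast : ∫ x in m * l..m * l + c, periodize l g x = ∫ x in 0..c, g x := by
    have h := intervalIntegral.integral_comp_add_right (periodize l g) (m * l) (a := 0) (b := c)
    rw [(hper.nat_mul m).funext, zero_add, add_comm c] at h
    rw [← h, integral_periodize_of_mem_Icc hc]
  rw [← intervalIntegral.integral_add_adjacent_intervals (hint 0 (m * l)) (hint _ _), hperiods,
    hlast]

end Periodize

theorem integral_sin_mul_sq {c : ℝ} (hc : c ≠ 0) :
    ∫ x in 0..π / c, sin (c * x) ^ 2 = π / (2 * c) := by
  rw [intervalIntegral.integral_comp_mul_left (fun y => sin y ^ 2) hc, mul_zero,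
    mul_div_cancel₀ π hc, integral_sin_sq, sin_zero, sin_pi, smul_eq_mul]
  field_simp
  ring

/-- The amplitude `A / s` of the negative half wave makes the derivative continuous at `π / A`. -/
noncomputable def fucikProfile (A s : ℝ) (y : ℝ) : ℝ :=
  if y < π / A then sin (A * y) else -(A / s) * sin (s * (y - π / A))

section FucikProfile

variable {A s : ℝ}

theorem fucikProfile_sq_left (hA : 0 < A) :
    IntervalIntegrable (fun y => fucikProfile A s y ^ 2) volume 0 (π / A) ∧
      ∫ y in 0..π / A, fucikProfile A s y ^ 2 = π / (2 * A) := by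
  have heq : EqOn (fun y => sin (A * y) ^ 2) (fun y => fucikProfile A s y ^ 2)
      (uIoo 0 (π / A)) := by
    intro y hy
    rw [uIoo_of_le (by positivity)] at hy
    simp only [fucikProfile, if_pos hy.2]
  refine ⟨(Continuous.intervalIntegrable (by fun_prop) _ _).congr_uIoo heq, ?_⟩
  rw [← intervalIntegral.integral_congr_uIoo heq, integral_sin_mul_sq hA.ne']

theorem fucikProfile_sq_right (hA : 0 < A) (hs : 0 < s) :
    IntervalIntegrable (fun y => fucikProfile A s y ^ 2) volume (π / A) (π / A + π / s) ∧
      ∫ y in π / A..π / A + π / s, fucikProfile A s y ^ 2 = A ^ 2 * π / (2 * s ^ 3) := by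
  have heq : EqOn (fun y => (A / s) ^ 2 * sin (s * (y - π / A)) ^ 2)
      (fun y => fucikProfile A s y ^ 2) (uIoo (π / A) (π / A + π / s)) := by
    intro y hy
    rw [uIoo_of_le (by linarith [div_pos pi_pos hs])] at hy
    simp only [fucikProfile, if_neg (not_lt.mpr hy.1.le)]
    ring
  refine ⟨(Continuous.intervalIntegrable (by fun_prop) _ _).congr_uIoo heq, ?_⟩
  rw [← intervalIntegral.integral_congr_uIoo heq, intervalIntegral.integral_const_mul,
    intervalIntegral.integral_comp_sub_right (fun y => sin (s * y) ^ 2), sub_self,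
    add_sub_cancel_left, integral_sin_mul_sq hs.ne']
  field_simp

theorem fucikProfile_sq_period (hA : 0 < A) (hs : 0 < s) :
    IntervalIntegrable (fun y => fucikProfile A s y ^ 2) volume 0 (π / A + π / s) ∧
      ∫ y in 0..π / A + π / s, fucikProfile A s y ^ 2
        = π / (2 * A) + A ^ 2 * π / (2 * s ^ 3) := by
  obtain ⟨hint₁, hval₁⟩ := fucikProfile_sq_left (s := s) hA
  obtain ⟨hint₂, hval₂⟩ := fucikProfile_sq_right hA hs
  refine ⟨hint₁.trans hint₂, ?_⟩
  rw [← intervalIntegral.integral_add_adjacent_intervals hint₁ hint₂, hval₁, hval₂]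

end FucikProfile

theorem fucikEf_eq_periodize {n : ℕ} (hn : n ≠ 1) {a b : ℝ} (ha : a < (n : ℝ) ^ 2) :
    fucikEf n a b = periodize (π / √a + π / √b) (fucikProfile √a √b) := by
  ext x
  simp only [fucikEf, if_neg hn, if_neg (not_le.mpr ha)]
  rfl

theorem fucik_normSq_formula {n A s : ℝ} (hn : 1 ≤ n) (hA : 0 < A) (hs : 0 < s)
    (hcurve : (n + 1) / 2 * (π / A) + (n - 1) / 2 * (π / s) = π) :
    (n - 1) / 2 * (π / (2 * A) + A ^ 2 * π / (2 * s ^ 3)) + π / (2 * A)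
      = π / 2 - π * (n - 1) * (s + 1) * (s - n) / (s * (2 * s - (n - 1)) ^ 2) := by
  have hrel : (n + 1) * s + (n - 1) * A = 2 * A * s := by
    field_simp at hcurve
    linear_combination hcurve
  have hD : 0 < 2 * s - (n - 1) := by nlinarith
  have hA_eq : A = (n + 1) * s / (2 * s - (n - 1)) := by
    rw [eq_div_iff hD.ne']
    linear_combination -hrel
  subst hA_eq
  field_simp
  ring

theorem fucik_normSq_odd_b_gt_general (n : ℕ) (hn : 3 ≤ n) (hno : Odd n) (a b : ℝ)
    (hΓ : FucikCurve n a b) (ha : a < (n:ℝ)^2) :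
    L2normSq (fucikEf n a b)
      = π/2 - π*((n:ℝ)-1)*(Real.sqrt b + 1)*(Real.sqrt b - (n:ℝ))
          /(Real.sqrt b*(2*Real.sqrt b - ((n:ℝ)-1))^2) := by
  obtain ⟨ha₁, hb₁, hcurve⟩ := hΓ
  rw [if_neg (Nat.not_even_iff_odd.mpr hno)] at hcurve
  have hA : 0 < √a := sqrt_pos.mpr (by linarith)
  have hs : 0 < √b := sqrt_pos.mpr (by linarith)
  obtain ⟨m, rfl⟩ := hno
  have hπ : π = m * (π / √a + π / √b) + π / √a := by
    push_cast at hcurve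
    linear_combination -hcurve
  obtain ⟨hint, hperiod⟩ := fucikProfile_sq_period hA hs
  have hhalf := (fucikProfile_sq_left (s := √b) hA).2
  rw [L2normSq, ← integral_Ioc_eq_integral_Ioo, ← intervalIntegral.integral_of_le pi_pos.le,
    fucikEf_eq_periodize (by omega) ha]
  calc ∫ x in 0..π, periodize (π / √a + π / √b) (fucikProfile √a √b) x ^ 2
      = ∫ x in 0..m * (π / √a + π / √b) + π / √a,
          periodize (π / √a + π / √b) (fun y => fucikProfile √a √b y ^ 2) x := by
        rw [← hπ]; rfl
    _ = _ := integral_periodize_nat_mul_add (by positivity) hint m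
        ⟨by positivity, by linarith [div_pos pi_pos hs]⟩
    _ = _ := by
        rw [hperiod, hhalf]
        convert fucik_normSq_formula (n := (2 * m + 1 : ℕ)) (by simp) hA hs
          (by exact_mod_cast hcurve) using 2
        push_cast
        ring

theorem fucik_normSq_odd_b_gt (n : ℕ) (hn : 3 ≤ n) (hno : Odd n) (a b : ℝ)
    (hΓ : FucikCurve n a b) (hb : (n:ℝ)^2 < b) (ha : a < (n:ℝ)^2) :
    L2normSq (fucikEf n a b)
      = π/2 - π*((n:ℝ)-1)*(Real.sqrt b + 1)*(Real.sqrt b - (n:ℝ))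
          /(Real.sqrt b*(2*Real.sqrt b - ((n:ℝ)-1))^2) :=
  fucik_normSq_odd_b_gt_general n hn hno a b hΓ ha
end

section
/- Let n ≥ 2 be even and (α,β) ∈ Γ_n with α > n² > β. Then ‖f^n_{α,β} − φ_n‖² = π − π·n·(√α − n)/(2√α − n)² − (4α²/((2√α − n)(3√α − n)(√α + n)))·sin(nπ/√α)/(√α − n). -/
open MeasureTheory Real Set Filter

/-
Both `f^n_{α,β}` and `φ_n` are periodic with period `l = l₁ + l₂ = 2π/n`, and `π = (n/2)·l`, so
the squared distance is `n/2` times the integral over one period. There `f^n_{α,β}` is a sine arch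
of frequency `√α` on `[0, l₁]` followed by a negative arch of frequency `√β` on `[l₁, l]`; the
integral of `(A sin (c (x - x₀)) - sin (n x))²` over an arch `[x₀, x₀ + π/c]` has a closed form,
and on `Γ_n` one has `√β = n√α / (2√α - n)`.
-/

open Function

lemma hasDerivAt_sin_mul_add_div {k : ℝ} (hk : k ≠ 0) (d x : ℝ) :
    HasDerivAt (fun x => sin (k * x + d) / k) (cos (k * x + d)) x := by
  simpa [hk] using (((hasDerivAt_id x).const_mul k).add_const d).sin.div_const k

lemma mul_sin_sub_sin_sq (A p q : ℝ) :
    (A * sin p - sin q) ^ 2 = (A ^ 2 + 1) / 2 - A ^ 2 / 2 * cos (2 * p) - 1 / 2 * cos (2 * q)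
      - A * (cos (p - q) - cos (p + q)) := by
  rw [cos_two_mul, cos_two_mul, cos_sub, cos_add]
  linear_combination A ^ 2 * sin_sq_add_cos_sq p + sin_sq_add_cos_sq q

theorem integral_mul_sin_arch_sub_sin_sq {A c e : ℝ} (hc : c ≠ 0) (he : e ≠ 0)
    (hce : c - e ≠ 0) (hce' : c + e ≠ 0) (x₀ : ℝ) :
    ∫ x in x₀..x₀ + π / c, (A * sin (c * (x - x₀)) - sin (e * x)) ^ 2
      = (A ^ 2 + 1) * π / (2 * c) - (sin (2 * e * (x₀ + π / c)) - sin (2 * e * x₀)) / (4 * e)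
        - 2 * A * c * (sin (e * x₀) + sin (e * (x₀ + π / c))) / (c ^ 2 - e ^ 2) := by
  have hF : ∀ x, HasDerivAt (fun x => (A ^ 2 + 1) / 2 * x
      - A ^ 2 / 2 * (sin (2 * c * x + -(2 * c * x₀)) / (2 * c))
      - 1 / 2 * (sin (2 * e * x + 0) / (2 * e))
      - A * (sin ((c - e) * x + -(c * x₀)) / (c - e) - sin ((c + e) * x + -(c * x₀)) / (c + e)))
      ((A * sin (c * (x - x₀)) - sin (e * x)) ^ 2) x := by
    intro x
    refine ((((hasDerivAt_id x).const_mul _).sub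
      ((hasDerivAt_sin_mul_add_div (mul_ne_zero two_ne_zero hc) _ x).const_mul _)).sub
      ((hasDerivAt_sin_mul_add_div (mul_ne_zero two_ne_zero he) _ x).const_mul _)).sub
      (((hasDerivAt_sin_mul_add_div hce _ x).sub (hasDerivAt_sin_mul_add_div hce' _ x)).const_mul A)
      |>.congr_deriv ?_
    rw [mul_sin_sub_sin_sq]
    ring_nf
  rw [intervalIntegral.integral_eq_sub_of_hasDerivAt (fun x _ => hF x)
    (by apply Continuous.intervalIntegrable; fun_prop)]
  have h2c : 2 * c * (x₀ + π / c) + -(2 * c * x₀) = 2 * π := by field_simp; ring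
  have hsub : (c - e) * (x₀ + π / c) + -(c * x₀) = π - e * (x₀ + π / c) := by field_simp; ring
  have hadd : (c + e) * (x₀ + π / c) + -(c * x₀) = e * (x₀ + π / c) + π := by field_simp; ring
  have hsub₀ : (c - e) * x₀ + -(c * x₀) = -(e * x₀) := by ring
  have hadd₀ : (c + e) * x₀ + -(c * x₀) = e * x₀ := by ring
  simp only [h2c, hsub, hadd, hsub₀, hadd₀, add_neg_cancel, sin_two_pi, sin_zero, sin_pi_sub,
    sin_add_pi, sin_neg, add_zero]
  have hce₂ : c ^ 2 - e ^ 2 ≠ 0 := by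
    rw [sq_sub_sq]; exact mul_ne_zero hce' hce
  field_simp
  ring

lemma Function.Periodic.setIntegral_Ioo_zero_eq_mul {g : ℝ → ℝ} {T L : ℝ}
    (hg : Periodic g T) (hT : 0 < T) (hint : IntervalIntegrable g volume 0 T) {m : ℕ}
    (hm : m * T = L) : ∫ x in Ioo 0 L, g x = m * ∫ x in 0..T, g x := by
  have h := hg.intervalIntegral_add_zsmul_eq m 0 (hg.intervalIntegrable₀ hT.ne' hint)
  simp only [zero_add, natCast_zsmul, nsmul_eq_mul, hm] at h
  rw [← integral_Ioc_eq_integral_Ioo, ← intervalIntegral.integral_of_le (hm ▸ by positivity), h]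

lemma mul_fract_div_of_mem_Ico {l x : ℝ} (hx : x ∈ Ico 0 l) : l * Int.fract (x / l) = x := by
  have hl : 0 < l := hx.1.trans_lt hx.2
  rw [Int.fract_eq_self.mpr ⟨div_nonneg hx.1 hl.le, (div_lt_one hl).mpr hx.2⟩,
    mul_div_cancel₀ _ hl.ne']

section Fucik

variable {n : ℕ} {a b : ℝ}

lemma FucikCurve.natCast_mul_period_of_even (hΓ : FucikCurve n a b) (hne : Even n) :
    n * (π / √a + π / √b) = 2 * π := by
  have h := hΓ.2.2
  rw [if_pos hne] at h
  linear_combination 2 * h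

lemma FucikCurve.sqrt_right_of_even (hΓ : FucikCurve n a b) (hne : Even n)
    (ha : (n : ℝ) ^ 2 < a) : √b = n * √a / (2 * √a - n) := by
  have hs : (n : ℝ) < √a := lt_sqrt (Nat.cast_nonneg _) |>.mpr ha
  have hsa : 0 < √a := (Nat.cast_nonneg n).trans_lt hs
  have hsb : 0 < √b := sqrt_pos.mpr (one_pos.trans hΓ.2.1)
  have h := hΓ.natCast_mul_period_of_even hne
  rw [eq_div_iff (by linarith)]
  field_simp at h
  linear_combination -h

lemma fucikEf_periodic (hn : n ≠ 1) : Periodic (fucikEf n a b) (π / √a + π / √b) := by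
  intro x
  rcases eq_or_ne (π / √a + π / √b) 0 with hl | hl
  · rw [hl, add_zero]
  · simp only [fucikEf, if_neg hn, add_div, div_self hl, Int.fract_add_one]

lemma fucikEf_eq_of_mem_Icc_left (hn : n ≠ 1) (ha : (n : ℝ) ^ 2 ≤ a) (ha₀ : 0 < a) (hb : 0 < b)
    {x : ℝ} (hx : x ∈ Icc 0 (π / √a)) : fucikEf n a b x = √b / √a * sin (√a * x) := by
  have hl₂ : 0 < π / √b := by positivity
  simp only [fucikEf, if_neg hn, if_pos ha]
  rcases hx.2.lt_or_eq with hlt | rfl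
  · rw [mul_fract_div_of_mem_Ico ⟨hx.1, by linarith⟩, if_pos hlt]
  · rw [mul_fract_div_of_mem_Ico ⟨hx.1, by linarith⟩, if_neg (lt_irrefl _), sub_self, mul_zero,
      mul_div_cancel₀ _ (sqrt_pos.mpr ha₀).ne', sin_zero, sin_pi, neg_zero, mul_zero]

lemma fucikEf_eq_of_mem_Icc_right (hn : n ≠ 1) (ha : (n : ℝ) ^ 2 ≤ a) (ha₀ : 0 < a) (hb : 0 < b)
    {x : ℝ} (hx : x ∈ Icc (π / √a) (π / √a + π / √b)) :
    fucikEf n a b x = -sin (√b * (x - π / √a)) := by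
  have hl₁ : 0 < π / √a := by positivity
  simp only [fucikEf, if_neg hn, if_pos ha]
  rcases hx.2.lt_or_eq with hlt | rfl
  · rw [mul_fract_div_of_mem_Ico ⟨by linarith [hx.1], hlt⟩, if_neg (not_lt.mpr hx.1)]
  · rw [div_self (by positivity), Int.fract_one, mul_zero, if_pos hl₁, mul_zero, sin_zero,
      mul_zero, add_sub_cancel_left, mul_div_cancel₀ _ (sqrt_pos.mpr hb).ne', sin_pi, neg_zero]

lemma continuousOn_fucikEf (hn : n ≠ 1) (ha : (n : ℝ) ^ 2 ≤ a) (ha₀ : 0 < a) (hb : 0 < b) :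
    ContinuousOn (fucikEf n a b) (Icc 0 (π / √a + π / √b)) := by
  have hl₁ : 0 ≤ π / √a := by positivity
  have hl₂ : 0 ≤ π / √b := by positivity
  rw [← Icc_union_Icc_eq_Icc hl₁ (le_add_of_nonneg_right hl₂)]
  refine ContinuousOn.union_of_isClosed ?_ ?_ isClosed_Icc isClosed_Icc
  · exact (Continuous.continuousOn (by fun_prop)).congr
      fun x hx => fucikEf_eq_of_mem_Icc_left hn ha ha₀ hb hx
  · exact (Continuous.continuousOn (by fun_prop)).congr
      fun x hx => fucikEf_eq_of_mem_Icc_right hn ha ha₀ hb hx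

lemma intervalIntegrable_fucikEf_sub_sin_sq (hn : n ≠ 1) (ha : (n : ℝ) ^ 2 ≤ a) (ha₀ : 0 < a)
    (hb : 0 < b) : IntervalIntegrable (fun x => (fucikEf n a b x - sin (n * x)) ^ 2) volume 0
      (π / √a + π / √b) :=
  (((continuousOn_fucikEf hn ha ha₀ hb).sub (by fun_prop)).pow 2).intervalIntegrable_of_Icc
    (by positivity)

lemma integral_fucikEf_sub_sin_sq (hn : n ≠ 1) (ha : (n : ℝ) ^ 2 < a) (hb : 0 < b)
    (hbn : b ≠ n ^ 2) (hperiod : n * (π / √a + π / √b) = 2 * π) :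
    ∫ x in 0..π / √a + π / √b, (fucikEf n a b x - sin (n * x)) ^ 2
      = ((√b / √a) ^ 2 + 1) * π / (2 * √a) + π / √b
        + 2 * √b * sin (n * π / √a) * (1 / (√b ^ 2 - n ^ 2) - 1 / (√a ^ 2 - n ^ 2)) := by
  have hn₀ : (n : ℝ) ≠ 0 := by rintro h; rw [h, zero_mul] at hperiod; linarith [pi_pos]
  have ha₀ : 0 < a := lt_of_le_of_lt (sq_nonneg _) ha
  have hsn : (n : ℝ) < √a := lt_sqrt (Nat.cast_nonneg n) |>.mpr ha
  have htn : √b ≠ n := fun h => hbn (by rw [← h, sq_sqrt hb.le])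
  have hs : 0 < √a := sqrt_pos.mpr ha₀
  have ht : 0 < √b := sqrt_pos.mpr hb
  have hl₁ : 0 ≤ π / √a := by positivity
  have hl₂ : 0 ≤ π / √b := by positivity
  have hint := intervalIntegrable_fucikEf_sub_sin_sq hn ha.le ha₀ hb
  have hleft : ∫ x in 0..π / √a, (fucikEf n a b x - sin (n * x)) ^ 2
      = ∫ x in 0..0 + π / √a, (√b / √a * sin (√a * (x - 0)) - sin (n * x)) ^ 2 := by
    rw [zero_add]
    refine intervalIntegral.integral_congr fun x hx => ?_
    rw [uIcc_of_le hl₁] at hx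
    simp only [fucikEf_eq_of_mem_Icc_left hn ha.le ha₀ hb hx, sub_zero]
  have hright : ∫ x in π / √a..π / √a + π / √b, (fucikEf n a b x - sin (n * x)) ^ 2
      = ∫ x in π / √a..π / √a + π / √b, (-1 * sin (√b * (x - π / √a)) - sin (n * x)) ^ 2 := by
    refine intervalIntegral.integral_congr fun x hx => ?_
    rw [uIcc_of_le (le_add_of_nonneg_right hl₂)] at hx
    simp only [fucikEf_eq_of_mem_Icc_right hn ha.le ha₀ hb hx, neg_one_mul]
  have hsin : sin (n * (π / √a + π / √b)) = 0 := by rw [hperiod, sin_two_pi]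
  have hsin₂ : sin (2 * n * (π / √a + π / √b)) = 0 := by
    rw [mul_assoc, hperiod, ← mul_assoc, sin_eq_zero_iff]; exact ⟨4, by push_cast; ring⟩
  have hmid : π / √a ∈ uIcc 0 (π / √a + π / √b) := by
    rw [uIcc_of_le (by positivity)]; exact ⟨hl₁, le_add_of_nonneg_right hl₂⟩
  rw [← intervalIntegral.integral_add_adjacent_intervals
      (hint.mono_set (uIcc_subset_uIcc_left hmid)) (hint.mono_set (uIcc_subset_uIcc_right hmid)),
    hleft, hright,
    integral_mul_sin_arch_sub_sin_sq hs.ne' hn₀ (by linarith) (by linarith),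
    integral_mul_sin_arch_sub_sin_sq ht.ne' hn₀ (sub_ne_zero.mpr htn) (by positivity), hsin, hsin₂]
  have han : √a ^ 2 - n ^ 2 ≠ 0 := by rw [sq_sqrt ha₀.le]; linarith
  have hbn' : √b ^ 2 - n ^ 2 ≠ 0 := by rw [sq_sqrt hb.le]; exact sub_ne_zero.mpr hbn
  simp only [zero_add, mul_zero, sin_zero, sub_zero, add_zero, mul_div_assoc]
  field_simp
  ring

end Fucik

lemma half_mul_fucik_period_integral_eq {n s t : ℝ} (hn : 0 < n) (hs : n < s)
    (ht : t = n * s / (2 * s - n)) (S : ℝ) :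
    n / 2 * (((t / s) ^ 2 + 1) * π / (2 * s) + π / t
        + 2 * t * S * (1 / (t ^ 2 - n ^ 2) - 1 / (s ^ 2 - n ^ 2)))
      = π - π * n * (s - n) / (2 * s - n) ^ 2
        - 4 * s ^ 4 / ((2 * s - n) * (3 * s - n) * (s + n)) * (S / (s - n)) := by
  have hn₀ : n ≠ 0 := hn.ne'
  have hs₀ : s ≠ 0 := by linarith
  have h2 : 2 * s - n ≠ 0 := by linarith
  have htn : t ^ 2 - n ^ 2 = -(n ^ 2 * (s - n) * (3 * s - n)) / (2 * s - n) ^ 2 := by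
    rw [ht, eq_div_iff (pow_ne_zero 2 h2), div_pow, sub_mul, div_mul_cancel₀ _ (pow_ne_zero 2 h2)]
    ring
  have hsn : s ^ 2 - n ^ 2 ≠ 0 := by nlinarith
  have h3 : s * 3 - n ≠ 0 := by linarith
  have h4 : s - n ≠ 0 := by linarith
  have h5 : s + n ≠ 0 := by linarith
  rw [htn, ht]
  field_simp [show s * 2 - n ≠ 0 by linarith]
  ring

theorem fucik_distSq_even_a_gt (n : ℕ) (hn : 2 ≤ n) (hne : Even n) (a b : ℝ)
    (hΓ : FucikCurve n a b) (ha : (n:ℝ)^2 < a) (hb : b < (n:ℝ)^2) :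
    L2normSq (fun x => fucikEf n a b x - Real.sin ((n:ℝ)*x))
      = π - π*(n:ℝ)*(Real.sqrt a - (n:ℝ))/(2*Real.sqrt a - (n:ℝ))^2
        - (4*a^2/((2*Real.sqrt a - (n:ℝ))*(3*Real.sqrt a - (n:ℝ))*(Real.sqrt a + (n:ℝ))))
          * (Real.sin ((n:ℝ)*π/Real.sqrt a)/(Real.sqrt a - (n:ℝ))) := by
  have hn₁ : n ≠ 1 := by omega
  have hn₀ : (0 : ℝ) < n := by positivity
  have ha₀ : 0 < a := (pow_pos hn₀ 2).trans ha
  have hb₀ : 0 < b := one_pos.trans hΓ.2.1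
  have hperiod := hΓ.natCast_mul_period_of_even hne
  have hsqrtb := hΓ.sqrt_right_of_even hne ha
  have hG : Periodic (fun x => (fucikEf n a b x - sin (n * x)) ^ 2) (π / √a + π / √b) :=
    fun x => by simp only [fucikEf_periodic hn₁ x, mul_add _ x, hperiod, sin_add_two_pi]
  obtain ⟨m, hm⟩ := hne
  have hm' : (m : ℝ) = n / 2 := by rw [hm]; push_cast; ring
  rw [L2normSq, hG.setIntegral_Ioo_zero_eq_mul (by positivity)
      (intervalIntegrable_fucikEf_sub_sin_sq hn₁ ha.le ha₀ hb₀) (by rw [hm']; linarith),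
    integral_fucikEf_sub_sin_sq hn₁ ha hb₀ hb.ne hperiod, hm',
    show a ^ 2 = √a ^ 4 by rw [show 4 = 2 * 2 from rfl, pow_mul, sq_sqrt ha₀.le]]
  exact half_mul_fucik_period_integral_eq hn₀ (lt_sqrt hn₀.le |>.mpr ha) hsqrtb _
end
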